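/- Let n ≥ 1, m = 2n, and let A, B be 2n×2n complex matrices such that the block matrix (A | B) has rank 2n. Then the following are equivalent: (i) for every 2n times continuously differentiable y : [0,1] → ℂ satisfying A ŷ₀ + B ŷ₁ = 0 one has Im(∫₀¹ (−i)^{2n} y^{(2n)}(x)·conj(y(x)) dx) ≥ 0; (ii) there exists a linear map V : ℂ^{2n} → ℂ^{2n} with ‖Vx‖ ≤ ‖x‖ for all x, such that for every 2n times continuously differentiable y : [0,1] → ℂ one has A ŷ₀ + B ŷ₁ = 0 if and only if (V − I)·y^∨ + i(V + I)·y^∧ = 0. -/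

import Mathlib

/-!
Integrating by parts `n` times gives Green's formula
`Im ∫₀¹ (−i)^{2n} y^{(2n)} ȳ = Im ⟪y^∧, y^∨⟫`, and `Im ⟪w, u⟫ ≥ 0` iff `‖u − i w‖ ≤ ‖u + i w‖`.
Every pair of jets at `0` and `1` is realised by a smooth function, so (i) says that on the
`2n`-dimensional space `S` of jets satisfying the boundary conditions, `P = y^∨ + i y^∧` dominates
`M = y^∨ − i y^∧` in norm. As `(P, M)` is injective on jets, `P` is then injective on `S`, hence
an isomorphism `S ≃ ℂ^{2n}`, and `V = M ∘ P⁻¹` is a contraction with `S = {V P = M}`; the boundary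
condition `(V − I) y^∨ + i (V + I) y^∧ = 0` is `V P = M`. Conversely `‖M‖ = ‖V P‖ ≤ ‖P‖` on `S`.
-/

open Complex Finset Filter Module Polynomial Topology
open scoped ComplexConjugate ContDiff InnerProductSpace

/-- The vector `y^∧ = (y(0), …, y^{(n−1)}(0), y(1), …, y^{(n−1)}(1)) ∈ ℂ^{2n}`
(0-indexed components), as an element of Euclidean space. -/
noncomputable def ywedge (n : ℕ) (y : ℝ → ℂ) : EuclideanSpace ℂ (Fin (2 * n)) := WithLp.toLp 2 fun k =>
  if (k : ℕ) < n then iteratedDeriv (k : ℕ) y 0 else iteratedDeriv ((k : ℕ) - n) y 1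

/-- The vector `y^∨` of quasi-derivatives: with 0-indexed component `k`,
`(y^∨)_k = (−1)^{n−1−k}·y^{(2n−1−k)}(0)` for `k < n` and
`(y^∨)_{n+k} = −(−1)^{n−1−k}·y^{(2n−1−k)}(1)` for `k < n`. -/
noncomputable def yvee (n : ℕ) (y : ℝ → ℂ) : EuclideanSpace ℂ (Fin (2 * n)) := WithLp.toLp 2 fun k =>
  if (k : ℕ) < n then
    (-1 : ℂ) ^ (n - 1 - (k : ℕ)) * iteratedDeriv (2 * n - 1 - (k : ℕ)) y 0
  else
    -((-1 : ℂ) ^ (n - 1 - ((k : ℕ) - n)) * iteratedDeriv (2 * n - 1 - ((k : ℕ) - n)) y 1)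

theorem Matrix.finrank_ker_coprod_mulVecLin_add_rank {K m ι κ : Type*} [Field K]
    [Fintype ι] [Fintype κ] (A : Matrix m ι K) (B : Matrix m κ K) :
    finrank K (LinearMap.ker (A.mulVecLin.coprod B.mulVecLin)) + (fromCols A B).rank =
      Fintype.card ι + Fintype.card κ := by
  have hcomp : A.mulVecLin.coprod B.mulVecLin = (fromCols A B).mulVecLin ∘ₗ
      (LinearEquiv.sumArrowLequivProdArrow ι κ K K).symm.toLinearMap :=
    LinearMap.ext fun ξ => (fromCols_mulVec_sumElim A B ξ.1 ξ.2).symm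
  have hrange : LinearMap.range (A.mulVecLin.coprod B.mulVecLin) =
      LinearMap.range (fromCols A B).mulVecLin := by
    rw [hcomp, LinearMap.range_comp_of_range_eq_top _ (LinearEquiv.range _)]
  rw [rank, ← hrange, add_comm, LinearMap.finrank_range_add_finrank_ker]
  simp

theorem forall_norm_le_iff_exists_contraction {K E H : Type*} [Field K] [AddCommGroup E]
    [Module K E] [FiniteDimensional K E] [NormedAddCommGroup H] [Module K H]
    [FiniteDimensional K H] (P M : E →ₗ[K] H) (hPM : ∀ ξ, P ξ = 0 → M ξ = 0 → ξ = 0)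
    (S : Submodule K E) (hS : finrank K S = finrank K H) :
    (∀ ξ ∈ S, ‖M ξ‖ ≤ ‖P ξ‖) ↔
      ∃ V : H →ₗ[K] H, (∀ x, ‖V x‖ ≤ ‖x‖) ∧ ∀ ξ, ξ ∈ S ↔ V (P ξ) = M ξ := by
  constructor
  · intro hle
    have hinj : Function.Injective (P.domRestrict S) := by
      refine (injective_iff_map_eq_zero _).2 fun ξ hξ => Subtype.ext (hPM ξ hξ ?_)
      have hPξ : P ξ = 0 := hξ
      simpa [hPξ] using hle ξ ξ.2
    let e := (P.domRestrict S).linearEquivOfInjective hinj hS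
    refine ⟨M.domRestrict S ∘ₗ e.symm.toLinearMap, fun x => ?_,
      fun ξ => ⟨fun hξ => ?_, fun h => ?_⟩⟩
    · obtain ⟨ξ, rfl⟩ := e.surjective x
      change ‖M (e.symm (e ξ))‖ ≤ ‖P ξ‖
      rw [e.symm_apply_apply]
      exact hle ξ ξ.2
    · have : e.symm (P ξ) = ⟨ξ, hξ⟩ := e.symm_apply_eq.2 rfl
      simp [this]
    · set ζ := e.symm (P ξ)
      have hP : P ζ = P ξ := e.apply_symm_apply (P ξ)
      have hM : M ζ = M ξ := h
      have : (ζ : E) = ξ := sub_eq_zero.1 (hPM _ (by simp [hP]) (by simp [hM]))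
      exact this ▸ ζ.2
  · rintro ⟨V, hV, hVS⟩ ξ hξ
    rw [← (hVS ξ).1 hξ]
    exact hV _

theorem norm_sub_I_smul_le_norm_add_I_smul_iff {H : Type*} [NormedAddCommGroup H]
    [InnerProductSpace ℂ H] (u w : H) : ‖u - I • w‖ ≤ ‖u + I • w‖ ↔ 0 ≤ (⟪w, u⟫_ℂ).im := by
  have key : ‖u + I • w‖ ^ 2 - ‖u - I • w‖ ^ 2 = 4 * (⟪w, u⟫_ℂ).im := by
    rw [@norm_add_sq ℂ, @norm_sub_sq ℂ, inner_smul_right, ← inner_conj_symm u w]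
    simp only [RCLike.re_to_complex, mul_re, I_re, I_im, conj_im, zero_mul, one_mul, zero_sub]
    ring
  rw [← sq_le_sq₀ (norm_nonneg _) (norm_nonneg _)]
  constructor <;> intro h <;> linarith

theorem forall_im_inner_nonneg_iff_exists_contraction {E H : Type*} [AddCommGroup E]
    [Module ℂ E] [FiniteDimensional ℂ E] [NormedAddCommGroup H] [InnerProductSpace ℂ H]
    [FiniteDimensional ℂ H] (u w : E →ₗ[ℂ] H) (huw : ∀ ξ, u ξ = 0 → w ξ = 0 → ξ = 0)
    (S : Submodule ℂ E) (hS : finrank ℂ S = finrank ℂ H) :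
    (∀ ξ ∈ S, 0 ≤ (⟪w ξ, u ξ⟫_ℂ).im) ↔
      ∃ V : H →ₗ[ℂ] H, (∀ x, ‖V x‖ ≤ ‖x‖) ∧
        ∀ ξ, ξ ∈ S ↔ (V (u ξ) - u ξ) + I • (V (w ξ) + w ξ) = 0 := by
  have hPM : ∀ ξ, (u + I • w) ξ = 0 → (u - I • w) ξ = 0 → ξ = 0 := by
    intro ξ hP hM
    simp only [LinearMap.add_apply, LinearMap.sub_apply, LinearMap.smul_apply] at hP hM
    refine huw ξ ?_ ?_
    · linear_combination (norm := module) (2⁻¹ : ℂ) • (hP + hM)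
    · have h2I : (2 * I) • w ξ = 0 := by linear_combination (norm := module) hP - hM
      exact (smul_eq_zero.1 h2I).resolve_left (by simp)
  have hgraph (V : H →ₗ[ℂ] H) (ξ : E) : (V (u ξ) - u ξ) + I • (V (w ξ) + w ξ) = 0 ↔
      V ((u + I • w) ξ) = (u - I • w) ξ := by
    have : (V (u ξ) - u ξ) + I • (V (w ξ) + w ξ) = V ((u + I • w) ξ) - (u - I • w) ξ := by
      simp only [LinearMap.add_apply, LinearMap.sub_apply, LinearMap.smul_apply, map_add,
        map_smul]
      module
    rw [this, sub_eq_zero]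
  simp_rw [← norm_sub_I_smul_le_norm_add_I_smul_iff, hgraph]
  exact forall_norm_le_iff_exists_contraction _ _ hPM S hS

namespace Polynomial

theorem exists_iterate_derivative_eval_eq {R : Type*} [Field R] [CharZero R] (t : R) {m : ℕ}
    (c : Fin m → R) : ∃ p : R[X], ∀ k : Fin m, (derivative^[k] p).eval t = c k := by
  refine ⟨taylor (-t) (∑ j : Fin m, C (c j / (j : ℕ).factorial) * X ^ (j : ℕ)), fun k => ?_⟩
  rw [← factorial_smul_hasseDeriv, LinearMap.smul_apply, eval_smul, ← taylor_coeff,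
    taylor_taylor, add_neg_cancel, taylor_zero, finsetSum_coeff,
    Finset.sum_eq_single k (fun j _ hj => by simp [coeff_X_pow, Fin.val_ne_of_ne hj.symm])
      (by simp)]
  simp only [coeff_C_mul_X_pow, if_true, nsmul_eq_mul]
  exact mul_div_cancel₀ _ (Nat.cast_ne_zero.2 (Nat.factorial_ne_zero _))

theorem iteratedDeriv_eval_ofReal (p : ℂ[X]) (k : ℕ) :
    iteratedDeriv k (fun x : ℝ => p.eval (x : ℂ)) =
      fun x : ℝ => (derivative^[k] p).eval (x : ℂ) := by
  induction k generalizing p with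
  | zero => simp
  | succ k ih =>
    rw [iteratedDeriv_succ', Function.iterate_succ_apply, ← ih]
    congr 1
    funext x
    exact ((p.hasDerivAt (x : ℂ)).comp_ofReal).deriv

theorem contDiff_eval_ofReal (p : ℂ[X]) {n : WithTop ℕ∞} :
    ContDiff ℝ n fun x : ℝ => p.eval (x : ℂ) :=
  ((p.contDiff_aeval n).restrict_scalars ℝ).comp ofRealCLM.contDiff

end Polynomial

noncomputable def boundaryJets (m : ℕ) (y : ℝ → ℂ) : (Fin m → ℂ) × (Fin m → ℂ) :=
  (fun k => iteratedDeriv k y 0, fun k => iteratedDeriv k y 1)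

theorem exists_contDiff_boundaryJets_eq (m : ℕ) (ξ : (Fin m → ℂ) × (Fin m → ℂ)) :
    ∃ y : ℝ → ℂ, ContDiff ℝ ∞ y ∧ boundaryJets m y = ξ := by
  obtain ⟨p, hp⟩ := exists_iterate_derivative_eval_eq (0 : ℂ) ξ.1
  obtain ⟨q, hq⟩ := exists_iterate_derivative_eval_eq (1 : ℂ) ξ.2
  -- a smooth cutoff, equal to `1` on `(-∞, 1/4]` and to `0` on `[1/2, ∞)`
  let φ : ℝ → ℂ := fun x => (Real.smoothTransition (2 - 4 * x) : ℂ)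
  let y : ℝ → ℂ := fun x => φ x * p.eval (x : ℂ) + (1 - φ x) * q.eval (x : ℂ)
  have hy0 : y =ᶠ[𝓝 0] fun x => p.eval (x : ℂ) := by
    filter_upwards [Iio_mem_nhds (by norm_num : (0 : ℝ) < 1 / 4)] with x (hx : x < 1 / 4)
    simp [y, φ, Real.smoothTransition.one_of_one_le (by linarith : 1 ≤ 2 - 4 * x)]
  have hy1 : y =ᶠ[𝓝 1] fun x => q.eval (x : ℂ) := by
    filter_upwards [Ioi_mem_nhds (by norm_num : (1 / 2 : ℝ) < 1)] with x (hx : 1 / 2 < x)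
    simp [y, φ, Real.smoothTransition.zero_of_nonpos (by linarith : 2 - 4 * x ≤ 0)]
  have hφ : ContDiff ℝ ∞ φ :=
    ofRealCLM.contDiff.comp (Real.smoothTransition.contDiff.comp (by fun_prop))
  refine ⟨y, (hφ.mul (contDiff_eval_ofReal p)).add ((contDiff_const.sub hφ).mul
    (contDiff_eval_ofReal q)), Prod.ext (funext fun k => ?_) (funext fun k => ?_)⟩
  · simpa [boundaryJets, hy0.iteratedDeriv_eq, iteratedDeriv_eval_ofReal] using hp k
  · simpa [boundaryJets, hy1.iteratedDeriv_eq, iteratedDeriv_eval_ofReal] using hq k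

theorem forall_contDiff_iff_forall_boundaryJets {m k : ℕ}
    {Q : (Fin m → ℂ) × (Fin m → ℂ) → Prop} :
    (∀ y : ℝ → ℂ, ContDiff ℝ k y → Q (boundaryJets m y)) ↔ ∀ ξ, Q ξ := by
  refine ⟨fun h ξ => ?_, fun h y _ => h _⟩
  obtain ⟨y, hy, rfl⟩ := exists_contDiff_boundaryJets_eq m ξ
  exact h y (contDiff_infty.1 hy k)

section IntegrationByParts

variable {y : ℝ → ℂ} {m : ℕ}

theorem ContDiff.hasDerivAt_iteratedDeriv (hy : ContDiff ℝ m y) {j : ℕ} (hj : j < m) (x : ℝ) :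
    HasDerivAt (iteratedDeriv j y) (iteratedDeriv (j + 1) y x) x := by
  rw [iteratedDeriv_succ]
  exact (hy.differentiable_iteratedDeriv j (mod_cast hj) x).hasDerivAt

theorem integral_conj_iteratedDeriv_mul_iteratedDeriv_succ (hy : ContDiff ℝ m y) {i k : ℕ}
    (hi : i < m) (hk : k < m) (a b : ℝ) :
    ∫ x in a..b, conj (iteratedDeriv k y x) * iteratedDeriv (i + 1) y x =
      conj (iteratedDeriv k y b) * iteratedDeriv i y b -
        conj (iteratedDeriv k y a) * iteratedDeriv i y a -
      ∫ x in a..b, conj (iteratedDeriv (k + 1) y x) * iteratedDeriv i y x := by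
  have hcont (j : ℕ) (hj : j ≤ m) : Continuous (iteratedDeriv j y) :=
    hy.continuous_iteratedDeriv j (mod_cast hj)
  refine intervalIntegral.integral_mul_deriv_eq_deriv_mul
    (fun x _ => ?_) (fun x _ => hy.hasDerivAt_iteratedDeriv hi x)
    ((continuous_conj.comp (hcont (k + 1) hk)).intervalIntegrable a b)
    ((hcont (i + 1) hi).intervalIntegrable a b)
  simpa only [starRingEnd_apply] using (hy.hasDerivAt_iteratedDeriv hk x).star

theorem integral_conj_mul_iteratedDeriv (hy : ContDiff ℝ m y) {k : ℕ} (hk : k ≤ m) (a b : ℝ) :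
    ∫ x in a..b, conj (y x) * iteratedDeriv m y x =
      ∑ j ∈ range k, (-1) ^ j *
          (conj (iteratedDeriv j y b) * iteratedDeriv (m - 1 - j) y b -
            conj (iteratedDeriv j y a) * iteratedDeriv (m - 1 - j) y a) +
        (-1) ^ k * ∫ x in a..b, conj (iteratedDeriv k y x) * iteratedDeriv (m - k) y x := by
  induction k with
  | zero => simp
  | succ k ih =>
    rw [ih (by omega), show m - k = m - 1 - k + 1 by omega,
      integral_conj_iteratedDeriv_mul_iteratedDeriv_succ hy (by omega) (by omega),
      sum_range_succ, show m - (k + 1) = m - 1 - k by omega]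
    ring

end IntegrationByParts

section BoundaryForms

variable (n : ℕ)

def wedgeMap : (Fin (2 * n) → ℂ) × (Fin (2 * n) → ℂ) →ₗ[ℂ] EuclideanSpace ℂ (Fin (2 * n)) where
  toFun ξ := WithLp.toLp 2 fun k => if (k : ℕ) < n then ξ.1 k else ξ.2 ⟨k - n, by omega⟩
  map_add' ξ ζ := by
    ext k
    simp only [PiLp.add_apply, Prod.fst_add, Prod.snd_add, Pi.add_apply]
    split_ifs <;> rfl
  map_smul' c ξ := by
    ext k
    simp only [PiLp.smul_apply, Prod.smul_fst, Prod.smul_snd, Pi.smul_apply]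
    split_ifs <;> rfl

def veeMap : (Fin (2 * n) → ℂ) × (Fin (2 * n) → ℂ) →ₗ[ℂ] EuclideanSpace ℂ (Fin (2 * n)) where
  toFun ξ := WithLp.toLp 2 fun k =>
    if (k : ℕ) < n then (-1) ^ (n - 1 - k) * ξ.1 ⟨2 * n - 1 - k, by omega⟩
    else -((-1) ^ (n - 1 - (k - n)) * ξ.2 ⟨2 * n - 1 - (k - n), by omega⟩)
  map_add' ξ ζ := by
    ext k
    simp only [PiLp.add_apply, Prod.fst_add, Prod.snd_add, Pi.add_apply]
    split_ifs <;> ring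
  map_smul' c ξ := by
    ext k
    simp only [PiLp.smul_apply, Prod.smul_fst, Prod.smul_snd, Pi.smul_apply, smul_eq_mul,
      RingHom.id_apply]
    split_ifs <;> ring

theorem ywedge_eq_wedgeMap (y : ℝ → ℂ) : ywedge n y = wedgeMap n (boundaryJets (2 * n) y) := rfl

theorem yvee_eq_veeMap (y : ℝ → ℂ) : yvee n y = veeMap n (boundaryJets (2 * n) y) := rfl

theorem eq_zero_of_veeMap_eq_zero_of_wedgeMap_eq_zero
    {ξ : (Fin (2 * n) → ℂ) × (Fin (2 * n) → ℂ)} (hv : veeMap n ξ = 0) (hw : wedgeMap n ξ = 0) :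
    ξ = 0 := by
  have hv' k : veeMap n ξ k = 0 := by rw [hv]; rfl
  have hw' k : wedgeMap n ξ k = 0 := by rw [hw]; rfl
  have hpow (k : ℕ) : (-1 : ℂ) ^ k ≠ 0 := by simp
  ext j <;> simp only [Prod.fst_zero, Prod.snd_zero, Pi.zero_apply] <;>
    by_cases hj : (j : ℕ) < n
  · simpa [wedgeMap, hj] using hw' j
  · have := hv' ⟨2 * n - 1 - j, by omega⟩
    simp only [veeMap, LinearMap.coe_mk, AddHom.coe_mk, show 2 * n - 1 - (j : ℕ) < n by omega,
      ↓reduceIte, mul_eq_zero, hpow, false_or] at this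
    exact (congrArg ξ.1 (Fin.ext (by dsimp only; omega))).trans this
  · simpa [wedgeMap] using hw' ⟨n + j, by omega⟩
  · have := hv' ⟨n + (2 * n - 1 - j), by omega⟩
    simp only [veeMap, LinearMap.coe_mk, AddHom.coe_mk, add_lt_iff_neg_left, not_lt_zero,
      ↓reduceIte, add_tsub_cancel_left, neg_eq_zero, mul_eq_zero, hpow, false_or] at this
    exact (congrArg ξ.2 (Fin.ext (by dsimp only; omega))).trans this

end BoundaryForms

theorem inner_ywedge_yvee (n : ℕ) (y : ℝ → ℂ) :
    ⟪ywedge n y, yvee n y⟫_ℂ = (-1) ^ n * ∑ j ∈ range n, (-1) ^ j *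
      (conj (iteratedDeriv j y 1) * iteratedDeriv (2 * n - 1 - j) y 1 -
        conj (iteratedDeriv j y 0) * iteratedDeriv (2 * n - 1 - j) y 0) := by
  have hsign (j : ℕ) (hj : j < n) : (-1 : ℂ) ^ n * (-1) ^ j = -(-1) ^ (n - 1 - j) := by
    obtain ⟨i, rfl⟩ := Nat.exists_eq_add_of_lt hj
    rw [show j + i + 1 - 1 - j = i by omega, ← pow_add,
      show j + i + 1 + j = i + 2 * j + 1 by ring, pow_succ, pow_add, pow_mul]
    simp
  rw [PiLp.inner_apply, ← Fin.sum_congr' _ (two_mul n).symm, Fin.sum_univ_add, sum_range,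
    mul_sum, ← sum_add_distrib]
  refine sum_congr rfl fun j _ => ?_
  simp only [ywedge, yvee, Fin.val_cast, Fin.val_castAdd, Fin.is_lt, ↓reduceIte,
    RCLike.inner_apply, Fin.natAdd_eq_addNat, Fin.val_addNat, add_lt_iff_neg_right, not_lt_zero,
    add_tsub_cancel_right, neg_mul]
  rw [← mul_assoc, hsign j j.isLt]
  ring

theorem im_integral_eq_im_inner_ywedge_yvee (n : ℕ) {y : ℝ → ℂ} (hy : ContDiff ℝ (2 * n) y) :
    (∫ x in (0 : ℝ)..1, (-I) ^ (2 * n) * iteratedDeriv (2 * n) y x * conj (y x)).im =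
      (⟪ywedge n y, yvee n y⟫_ℂ).im := by
  have hI : (-I) ^ (2 * n) = (-1) ^ n := by rw [pow_mul]; simp
  have hsq : ∫ x in (0 : ℝ)..1, conj (iteratedDeriv n y x) * iteratedDeriv n y x =
      ((∫ x in (0 : ℝ)..1, ‖iteratedDeriv n y x‖ ^ 2 : ℝ) : ℂ) := by
    rw [← intervalIntegral.integral_ofReal]
    simp_rw [conj_mul', ofReal_pow]
  simp_rw [hI, mul_assoc, mul_comm (iteratedDeriv (2 * n) y _)]
  rw [intervalIntegral.integral_const_mul,
    integral_conj_mul_iteratedDeriv hy (by omega : n ≤ 2 * n), show 2 * n - n = n by omega, hsq,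
    inner_ywedge_yvee, mul_add, ← mul_assoc, ← pow_add, ← two_mul, pow_mul]
  simp

theorem stmt12_general (n : ℕ) (A B : Matrix (Fin (2 * n)) (Fin (2 * n)) ℂ)
    (hrank : (Matrix.fromCols A B).rank = 2 * n) :
    (∀ y : ℝ → ℂ, ContDiff ℝ (2 * n) y →
      A.mulVec (fun k : Fin (2 * n) => iteratedDeriv (k : ℕ) y 0)
        + B.mulVec (fun k : Fin (2 * n) => iteratedDeriv (k : ℕ) y 1) = 0 →
      0 ≤ (∫ x in (0:ℝ)..1,
        (-Complex.I) ^ (2 * n) * iteratedDeriv (2 * n) y x * (starRingEnd ℂ) (y x)).im)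
    ↔
    (∃ V : EuclideanSpace ℂ (Fin (2 * n)) →ₗ[ℂ] EuclideanSpace ℂ (Fin (2 * n)),
      (∀ x, ‖V x‖ ≤ ‖x‖) ∧
      ∀ y : ℝ → ℂ, ContDiff ℝ (2 * n) y →
        (A.mulVec (fun k : Fin (2 * n) => iteratedDeriv (k : ℕ) y 0)
          + B.mulVec (fun k : Fin (2 * n) => iteratedDeriv (k : ℕ) y 1) = 0
        ↔ (V (yvee n y) - yvee n y) + Complex.I • (V (ywedge n y) + ywedge n y) = 0)) := by
  have hS : finrank ℂ (LinearMap.ker (A.mulVecLin.coprod B.mulVecLin)) =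
      finrank ℂ (EuclideanSpace ℂ (Fin (2 * n))) := by
    have := Matrix.finrank_ker_coprod_mulVecLin_add_rank A B
    rw [hrank, Fintype.card_fin] at this
    rw [finrank_euclideanSpace_fin]
    omega
  set S := LinearMap.ker (A.mulVecLin.coprod B.mulVecLin)
  calc _ ↔ ∀ ξ ∈ S, 0 ≤ (⟪wedgeMap n ξ, veeMap n ξ⟫_ℂ).im := by
        rw [← forall_contDiff_iff_forall_boundaryJets (k := 2 * n)]
        refine forall₂_congr fun y hy => ?_
        rw [im_integral_eq_im_inner_ywedge_yvee n hy, ywedge_eq_wedgeMap, yvee_eq_veeMap]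
        rfl
    _ ↔ _ := forall_im_inner_nonneg_iff_exists_contraction (veeMap n) (wedgeMap n)
        (fun _ => eq_zero_of_veeMap_eq_zero_of_wedgeMap_eq_zero n) S hS
    _ ↔ _ := by
        refine exists_congr fun V => and_congr_right' ?_
        simp_rw [ywedge_eq_wedgeMap, yvee_eq_veeMap]
        rw [← forall_contDiff_iff_forall_boundaryJets (k := 2 * n)]
        rfl

/-- for `rank (A | B) = 2n`, the boundary conditions `A ŷ₀ + B ŷ₁ = 0`
are dissipative for `l₀(y) = (−i)^{2n} y^{(2n)}` iff they can be rewritten as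
`(V − I)y^∨ + i(V + I)y^∧ = 0` with a linear contraction `V` of `ℂ^{2n}`. -/
theorem stmt12 (n : ℕ) (hn : 1 ≤ n) (A B : Matrix (Fin (2 * n)) (Fin (2 * n)) ℂ)
    (hrank : (Matrix.fromCols A B).rank = 2 * n) :
    (∀ y : ℝ → ℂ, ContDiff ℝ (2 * n) y →
      A.mulVec (fun k : Fin (2 * n) => iteratedDeriv (k : ℕ) y 0)
        + B.mulVec (fun k : Fin (2 * n) => iteratedDeriv (k : ℕ) y 1) = 0 →
      0 ≤ (∫ x in (0:ℝ)..1,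
        (-Complex.I) ^ (2 * n) * iteratedDeriv (2 * n) y x * (starRingEnd ℂ) (y x)).im)
    ↔
    (∃ V : EuclideanSpace ℂ (Fin (2 * n)) →ₗ[ℂ] EuclideanSpace ℂ (Fin (2 * n)),
      (∀ x, ‖V x‖ ≤ ‖x‖) ∧
      ∀ y : ℝ → ℂ, ContDiff ℝ (2 * n) y →
        (A.mulVec (fun k : Fin (2 * n) => iteratedDeriv (k : ℕ) y 0)
          + B.mulVec (fun k : Fin (2 * n) => iteratedDeriv (k : ℕ) y 1) = 0
        ↔ (V (yvee n y) - yvee n y) + Complex.I • (V (ywedge n y) + ywedge n y) = 0)) :=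
  stmt12_general n A B hrank
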